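/- If nonnegative real sequences v(t) satisfy v(t) ≤ ρ·v(t-1) + 2α(t)·K·√(v(t-1)) + α(t)²·K² for constants 0 ≤ ρ < 1, K > 0, and a nonnegative step-size sequence α with Σα(t)² < ∞, then Σ_t v(t) < ∞ and v(t) → 0. -/

import Mathlib

open Filter

/-! Absorbing the cross term by `2 b √x ≤ ε x + b² / ε`, with `ε > 0` so small that `r = ρ + ε < 1`,
turns the recursion into the linear one `v (t + 1) ≤ r v t + C α (t + 1)²`. Summing it gives
`(1 - r) ∑_{t < n} v t ≤ v 0 + C ∑ α²`, so the partial sums of `v` are bounded. -/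

lemma le_add_mul_of_le_add_two_mul_sqrt {ρ ε x y b : ℝ} (hε : 0 < ε) (hx : 0 ≤ x)
    (h : y ≤ ρ * x + 2 * b * √x + b ^ 2) :
    y ≤ (ρ + ε) * x + (1 + ε⁻¹) * b ^ 2 := by
  have hamgm := two_mul_le_add_mul_sq (a := √x) (b := b) hε
  rw [Real.sq_sqrt hx] at hamgm
  linarith

lemma sum_range_mul_le_of_le_mul_add {r : ℝ} {v w : ℕ → ℝ} (hv : ∀ n, 0 ≤ v n)
    (hw : Summable w) (hw0 : ∀ n, 0 ≤ w n) (h : ∀ n, v (n + 1) ≤ r * v n + w n) (n : ℕ) :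
    (1 - r) * ∑ i ∈ Finset.range n, v i ≤ v 0 + ∑' i, w i := by
  have hshift : ∑ i ∈ Finset.range n, v (i + 1) ≤ r * ∑ i ∈ Finset.range n, v i + ∑' i, w i :=
    calc ∑ i ∈ Finset.range n, v (i + 1)
        ≤ ∑ i ∈ Finset.range n, (r * v i + w i) := Finset.sum_le_sum fun i _ => h i
      _ = r * ∑ i ∈ Finset.range n, v i + ∑ i ∈ Finset.range n, w i := by
        rw [Finset.sum_add_distrib, Finset.mul_sum]
      _ ≤ r * ∑ i ∈ Finset.range n, v i + ∑' i, w i := by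
        gcongr
        exact hw.sum_le_tsum _ fun i _ => hw0 i
  have hsucc := Finset.sum_range_succ v n
  rw [Finset.sum_range_succ'] at hsucc
  linarith [hv n]

lemma summable_of_le_mul_add {r : ℝ} (hr : r < 1) {v w : ℕ → ℝ}
    (hv : ∀ n, 0 ≤ v n) (hw : Summable w) (hw0 : ∀ n, 0 ≤ w n)
    (h : ∀ n, v (n + 1) ≤ r * v n + w n) : Summable v := by
  refine summable_of_sum_range_le (c := (v 0 + ∑' i, w i) / (1 - r)) hv fun n => ?_
  rw [le_div_iff₀' (sub_pos.mpr hr)]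
  exact sum_range_mul_le_of_le_mul_add hv hw hw0 h n

theorem stmt0_general (ρ K : ℝ) (hρ1 : ρ < 1)
    (α v : ℕ → ℝ) (hα2 : Summable (fun t => (α t) ^ 2))
    (hv : ∀ t, 0 ≤ v t)
    (hrec : ∀ t : ℕ, 1 ≤ t →
      v t ≤ ρ * v (t - 1) + 2 * α t * K * Real.sqrt (v (t - 1)) + (α t) ^ 2 * K ^ 2) :
    Summable v ∧ Tendsto v atTop (nhds 0) := by
  obtain ⟨ε, hε, hρε⟩ : ∃ ε > 0, ρ + ε < 1 := ⟨(1 - ρ) / 2, by linarith, by linarith⟩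
  have hstep : ∀ t, v (t + 1) ≤ (ρ + ε) * v t + (1 + ε⁻¹) * (α (t + 1) * K) ^ 2 := fun t =>
    le_add_mul_of_le_add_two_mul_sqrt hε (hv t) <| by
      convert hrec (t + 1) t.succ_pos using 1
      simp only [Nat.add_sub_cancel]
      ring
  have hforcing : Summable fun t => (1 + ε⁻¹) * (α (t + 1) * K) ^ 2 := by
    simp_rw [mul_pow]
    exact (((summable_nat_add_iff 1).mpr hα2).mul_right _).mul_left _
  have hsum : Summable v :=
    summable_of_le_mul_add hρε hv hforcing (fun _ => by positivity) hstep
  exact ⟨hsum, hsum.tendsto_atTop_zero⟩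

/-- If nonnegative real sequences `v` satisfy
`v t ≤ ρ v (t-1) + 2 α t K √(v (t-1)) + (α t)^2 K^2` for `0 ≤ ρ < 1`, `K > 0`,
nonnegative `α` with `∑ α t ^ 2 < ∞`, then `∑ v t < ∞` and `v t → 0`. -/
theorem stmt0 (ρ K : ℝ) (hρ0 : 0 ≤ ρ) (hρ1 : ρ < 1) (hK : 0 < K)
    (α v : ℕ → ℝ) (hα : ∀ t, 0 ≤ α t) (hα2 : Summable (fun t => (α t) ^ 2))
    (hv : ∀ t, 0 ≤ v t)
    (hrec : ∀ t : ℕ, 1 ≤ t →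
      v t ≤ ρ * v (t - 1) + 2 * α t * K * Real.sqrt (v (t - 1)) + (α t) ^ 2 * K ^ 2) :
    Summable v ∧ Tendsto v atTop (nhds 0) :=
  stmt0_general ρ K hρ1 α v hα2 hv hrec
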